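/- arXiv:1110.2272 — 6 statements merged into one kernel-verified Lean document; each statement's English description precedes it below -/
import Mathlib

section
/- For every integer r ≥ 1, the complete multipartite graph K_{r×2} (r parts each of size 2) has no K_{⌊3r/2⌋+2} minor. -/
open SimpleGraph

/-- `H` is a minor of `G`, witnessed by disjoint nonempty connected branch sets in `G`
with an edge of `G` between the branch sets of any two adjacent vertices of `H`. -/
def HasMinor {V : Type*} {W : Type*} (G : SimpleGraph V) (H : SimpleGraph W) : Prop :=
  ∃ B : W → Set V,
    (∀ w, (B w).Nonempty) ∧
    (∀ w, (G.induce (B w)).Connected) ∧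
    (Pairwise fun w₁ w₂ => Disjoint (B w₁) (B w₂)) ∧
    (∀ ⦃w₁ w₂⦄, H.Adj w₁ w₂ → ∃ v₁ ∈ B w₁, ∃ v₂ ∈ B w₂, G.Adj v₁ v₂)

/-- `G` is `k`-choosable: for every list assignment with lists of size at least `k`,
there is a proper colouring of `G` from the lists. -/
def Choosable {V : Type*} (G : SimpleGraph V) (k : ℕ) : Prop :=
  ∀ L : V → Finset ℕ, (∀ v, k ≤ (L v).card) →
    ∃ C : V → ℕ, (∀ v, C v ∈ L v) ∧ ∀ ⦃u v⦄, G.Adj u v → C u ≠ C v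

/-- `G` is `d`-degenerate: every (finite) nonempty induced subgraph
has a vertex of degree at most `d`. -/
def Degenerate {V : Type*} (G : SimpleGraph V) (d : ℕ) : Prop :=
  ∀ s : Finset V, s.Nonempty → ∃ v ∈ s, ({u ∈ (s : Set V) | G.Adj v u}).ncard ≤ d

/-- The complete multipartite graph `K_{r×2}`: `r` parts each of size two,
i.e. `K_{2r}` minus a perfect matching. `v_i = (i,0)` and `w_i = (i,1)`. -/
def Krx2 (r : ℕ) : SimpleGraph (Fin r × Fin 2) :=
  SimpleGraph.fromRel (fun a b => a.1 ≠ b.1)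

/-- `Krx2 r` has no `K_{3r/2+2}` minor. -/
theorem Krx2_minor_free (r : ℕ) (hr : 1 ≤ r) :
    ¬ HasMinor (Krx2 r) (completeGraph (Fin (3 * r / 2 + 2))) := by
  rintro ⟨B, hne, hconn, hdisj, hadj⟩
  classical
  set f : Fin (3 * r / 2 + 2) → Finset (Fin r × Fin 2) := fun i => (B i).toFinset with hf
  have hmemf : ∀ i x, x ∈ f i ↔ x ∈ B i := by intro i x; simp [hf]
  have hfne : ∀ i, 1 ≤ (f i).card := by
    intro i
    refine Finset.card_pos.2 ?_
    obtain ⟨x, hx⟩ := hne i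
    exact ⟨x, (hmemf i x).2 hx⟩
  have hfd : ∀ i j, i ≠ j → Disjoint (f i) (f j) := by
    intro i j hij
    simpa [hf, Set.disjoint_toFinset] using hdisj hij
  -- total size bound
  have hsum : ∑ i, (f i).card ≤ 2 * r := by
    rw [← Finset.card_biUnion (fun i _ j _ hij => hfd i j hij)]
    calc (Finset.univ.biUnion f).card
        ≤ (Finset.univ : Finset (Fin r × Fin 2)).card :=
          Finset.card_le_card (Finset.subset_univ _)
      _ = 2 * r := by simp [mul_comm]
  -- singleton branch sets
  set S : Finset (Fin (3 * r / 2 + 2)) := Finset.univ.filter (fun i => (f i).card = 1) with hS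
  -- pick a vertex in each branch set
  have hpick : ∀ i, ∃ x, x ∈ B i := fun i => hne i
  choose v hv using hpick
  have huniq : ∀ i ∈ S, ∀ x ∈ B i, x = v i := by
    intro i hi x hx
    have hcard : (f i).card = 1 := by
      simpa [hS] using hi
    obtain ⟨a, ha⟩ := Finset.card_eq_one.1 hcard
    have h1 : x ∈ f i := (hmemf i x).2 hx
    have h2 : v i ∈ f i := (hmemf i (v i)).2 (hv i)
    rw [ha, Finset.mem_singleton] at h1 h2
    rw [h1, h2]
  -- singletons occupy distinct parts
  have hScard : S.card ≤ r := by
    have hinj : Set.InjOn (fun i => (v i).1) S := by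
      intro i hi j hj hij
      by_contra hne'
      obtain ⟨x, hx, y, hy, hxy⟩ := hadj (show (completeGraph (Fin (3 * r / 2 + 2))).Adj i j from hne')
      have hx' : x = v i := huniq i hi x hx
      have hy' : y = v j := huniq j hj y hy
      have : x.1 ≠ y.1 := by
        rcases hxy with ⟨hne2, h | h⟩
        · exact h
        · exact h.symm
      rw [hx', hy'] at this
      exact this hij
    calc S.card ≤ (Finset.univ : Finset (Fin r)).card :=
          Finset.card_le_card_of_injOn (fun i => (v i).1)
            (fun _ _ => Finset.mem_univ _) hinj
      _ = r := by simp
  -- each branch set contributes: card + [i ∈ S] ≥ 2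
  have hlow : ∀ i : Fin (3 * r / 2 + 2), 2 ≤ (f i).card + (if i ∈ S then 1 else 0) := by
    intro i
    by_cases hi : i ∈ S
    · have : (f i).card = 1 := by simpa [hS] using hi
      simp [hi, this]
    · have h1 : (f i).card ≠ 1 := by simpa [hS] using hi
      have := hfne i
      simp only [hi, if_false, add_zero]
      omega
  have hkey : 2 * (3 * r / 2 + 2) ≤ ∑ i, (f i).card + S.card := by
    have h1 : ∑ i : Fin (3 * r / 2 + 2), (2 : ℕ) ≤ ∑ i, ((f i).card + (if i ∈ S then 1 else 0)) :=
      Finset.sum_le_sum fun i _ => hlow i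
    have h2 : ∑ i : Fin (3 * r / 2 + 2), (2 : ℕ) = 2 * (3 * r / 2 + 2) := by simp [mul_comm]
    have h3 : ∑ i : Fin (3 * r / 2 + 2), ((f i).card + (if i ∈ S then 1 else 0))
        = ∑ i, (f i).card + S.card := by
      rw [Finset.sum_add_distrib]
      congr 1
      simp [Finset.sum_ite_mem]
    omega
  omega
end

section
/- For every integer r ≥ 1, the complete multipartite graph K_{1,r×2} (one part of size 1 and r parts of size 2) has no K_{⌊3r/2⌋+3} minor. -/
open SimpleGraph

/-- The complete multipartite graph `K_{1,r×2}`: one part of size one and `r` parts of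
size two, i.e. `K_{2r+1}` minus a matching of `r` edges. -/
def K1rx2 (r : ℕ) : SimpleGraph (Option (Fin r × Fin 2)) :=
  SimpleGraph.fromRel (fun a b => Option.map Prod.fst a ≠ Option.map Prod.fst b)

/-- `K1rx2 r` has no `K_{3r/2+3}` minor. -/
theorem K1rx2_minor_free (r : ℕ) (hr : 1 ≤ r) :
    ¬ HasMinor (K1rx2 r) (completeGraph (Fin (3 * r / 2 + 3))) := by
  classical
  rintro ⟨B, hne, -, hdisj, hadj⟩
  set F : Fin (3 * r / 2 + 3) → Finset (Option (Fin r × Fin 2)) := fun i => (B i).toFinset with hF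
  have hFmem : ∀ i v, v ∈ F i ↔ v ∈ B i := fun i v => Set.mem_toFinset
  -- chosen element of each branch set
  have hv : ∀ i, (hne i).some ∈ B i := fun i => (hne i).some_mem
  set v : Fin (3 * r / 2 + 3) → Option (Fin r × Fin 2) := fun i => (hne i).some with hvdef
  have hcard1 : ∀ i, 1 ≤ (F i).card := fun i =>
    Finset.card_pos.mpr ⟨v i, (hFmem i _).mpr (hv i)⟩
  -- sum of cards is at most 2r+1
  have hsum : ∑ i, (F i).card ≤ 2 * r + 1 := by
    rw [← Finset.card_biUnion (by
      intro i _ j _ hij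
      simpa [hF, Set.disjoint_toFinset] using hdisj hij)]
    calc (Finset.univ.biUnion F).card ≤ Fintype.card (Option (Fin r × Fin 2)) :=
          Finset.card_le_univ _
      _ = 2 * r + 1 := by simp [Fintype.card_option]; ring
  set S : Finset (Fin (3 * r / 2 + 3)) := Finset.univ.filter (fun i => (F i).card = 1) with hS
  -- singletons form a clique, so S.card ≤ r + 1
  have hSle : S.card ≤ r + 1 := by
    have hsingle : ∀ i ∈ S, ∀ w ∈ B i, w = v i := by
      intro i hi w hw
      have h1 : (F i).card ≤ 1 := le_of_eq (Finset.mem_filter.mp hi).2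
      exact Finset.card_le_one.mp h1 w ((hFmem i _).mpr hw) (v i) ((hFmem i _).mpr (hv i))
    have hinj : Set.InjOn (fun i => Option.map Prod.fst (v i)) ↑S := by
      intro i hi j hj hij
      by_contra hne'
      obtain ⟨a, ha, b, hb, hab⟩ := hadj (show (completeGraph (Fin (3 * r / 2 + 3))).Adj i j from hne')
      rw [hsingle i hi a ha, hsingle j hj b hb] at hab
      rw [K1rx2, SimpleGraph.fromRel_adj] at hab
      rcases hab.2 with h | h
      · exact h hij
      · exact h hij.symm
    calc S.card ≤ (Finset.univ : Finset (Option (Fin r))).card :=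
          Finset.card_le_card_of_injOn _ (fun _ _ => Finset.mem_univ _) hinj
      _ = r + 1 := by simp
  -- lower bound on the sum
  have hsplit : ∑ i ∈ S, (F i).card + ∑ i ∈ Sᶜ, (F i).card = ∑ i, (F i).card :=
    Finset.sum_add_sum_compl S _
  have hSsum : ∑ i ∈ S, (F i).card = S.card := by
    rw [Finset.card_eq_sum_ones]
    exact Finset.sum_congr rfl (fun i hi => (Finset.mem_filter.mp hi).2)
  have hCsum : 2 * Sᶜ.card ≤ ∑ i ∈ Sᶜ, (F i).card := by
    rw [Finset.card_eq_sum_ones, Finset.mul_sum]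
    refine Finset.sum_le_sum (fun i hi => ?_)
    have h1 : (F i).card ≠ 1 := by
      have := Finset.mem_compl.mp hi
      simp [hS] at this
      exact this
    have := hcard1 i
    omega
  have hcc : S.card + Sᶜ.card = 3 * r / 2 + 3 := by
    simpa using Finset.card_add_card_compl S
  omega
end

section
/- Let H = K_{r×2} with deleted matching {v_1w_1, ..., v_rw_r}, and let q = |V(H)| - 2 = 2r - 2. Fix colours c_1, ..., c_r ∈ {1,...,q}, and define the list assignment L by L(w_i) = {1,...,q+1} \ {c_i} for each i, and L(u) = {1,...,q} for all other vertices u. Then in every proper L-colouring of H, some vertex v_i receives a colour different from c_i. -/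
open SimpleGraph

/-- With $q = 2r-2$, lists $L(w_i)=\{1,\dots,q+1\}\setminus\{c_i\}$ and
$L(v_i)=\{1,\dots,q\}$, every proper list colouring of $K_{r×2}$ has some $v_i$
coloured differently from $c_i$. -/
theorem forced_colour_fails (r : ℕ) (hr : 1 ≤ r) (c : Fin r → ℕ)
    (hc : ∀ i, c i ∈ Finset.Icc 1 (2 * r - 2))
    (C : Fin r × Fin 2 → ℕ)
    (hw : ∀ i : Fin r, C (i, 1) ∈ Finset.Icc 1 (2 * r - 1) \ {c i})
    (hv : ∀ i : Fin r, C (i, 0) ∈ Finset.Icc 1 (2 * r - 2))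
    (hproper : ∀ ⦃u v⦄, (Krx2 r).Adj u v → C u ≠ C v) :
    ∃ i : Fin r, C (i, 0) ≠ c i := by
  by_contra h
  push_neg at h
  have hadj : ∀ (i j : Fin r) (a b : Fin 2), i ≠ j → (Krx2 r).Adj (i, a) (j, b) := by
    intro i j a b hij
    simp [Krx2, SimpleGraph.fromRel_adj, hij, Prod.ext_iff]
  -- c is injective
  have hcinj : Function.Injective c := by
    intro i j hij
    by_contra hne
    exact hproper (hadj i j 0 0 hne) (by rw [h i, h j, hij])
  -- the target finset
  set T : Finset ℕ := Finset.Icc 1 (2 * r - 1) \ Finset.image c Finset.univ with hT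
  have hmem : ∀ i : Fin r, C (i, 1) ∈ T := by
    intro i
    have hi := hw i
    simp only [Finset.mem_sdiff, Finset.mem_singleton] at hi
    simp only [hT, Finset.mem_sdiff, Finset.mem_image, Finset.mem_univ, true_and]
    refine ⟨hi.1, ?_⟩
    rintro ⟨j, hj⟩
    rcases eq_or_ne j i with rfl | hne
    · exact hi.2 hj.symm
    · exact hproper (hadj j i 0 1 hne) (by rw [h j, hj])
  have hwinj : Function.Injective (fun i : Fin r => C (i, 1)) := by
    intro i j hij
    by_contra hne
    exact hproper (hadj i j 1 1 hne) hij
  have hcard : r ≤ T.card := by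
    calc r = (Finset.image (fun i : Fin r => C (i, 1)) Finset.univ).card := by
            rw [Finset.card_image_of_injective _ hwinj, Finset.card_univ, Fintype.card_fin]
      _ ≤ T.card := Finset.card_le_card (by
            intro x hx
            simp only [Finset.mem_image, Finset.mem_univ, true_and] at hx
            obtain ⟨i, rfl⟩ := hx
            exact hmem i)
  have hsub : Finset.image c Finset.univ ⊆ Finset.Icc 1 (2 * r - 1) := by
    intro x hx
    simp only [Finset.mem_image, Finset.mem_univ, true_and] at hx
    obtain ⟨i, rfl⟩ := hx
    have := hc i
    rw [Finset.mem_Icc] at this ⊢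
    omega
  have hTcard : T.card = (2 * r - 1) - r := by
    rw [hT, Finset.card_sdiff_of_subset hsub, Nat.card_Icc,
      Finset.card_image_of_injective _ hcinj, Finset.card_univ, Fintype.card_fin]
    omega
  omega
end

section
/- For every integer t ≥ 1, there exists a graph with no K_{3t+1} minor that is not (4t-2)-choosable. -/
open SimpleGraph

/-!
The graph glues copies of `K_{2t×2}` along a common clique `v_1, …, v_{2t}`, one copy for each
transversal `τ` of the pairwise disjoint colour blocks given to the `v_i`; the vertex `w_i` of the
copy `τ` gets the colours `τ j` of the blocks `j ≠ i` and `2t - 1` fresh colours. A colouring of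
the `v_i` picks a transversal, and in its copy every `w_i` is forced onto the fresh colours, too
few for the clique `w_1, …, w_{2t}`.

Connected branch sets avoiding the common clique lie in a single copy, and since they pairwise
touch, they all lie in the same copy `τ`. Intersecting all branch sets with that copy yields
pairwise touching, disjoint, nonempty sets in `K_{2t×2}`. There, two singletons must come from
different parts and the other sets have at least two vertices, so at most `3t` sets fit.
-/

open Function Finset

theorem two_mul_card_le_card_add_card_singletons {κ α : Type*} [Fintype κ]
    [Fintype α] (T : κ → Finset α) (hne : ∀ w, (T w).Nonempty)
    (hdisj : Pairwise (Disjoint on T)) :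
    2 * Fintype.card κ ≤ Fintype.card α + #{w | #(T w) = 1} := by
  classical
  have hsum : ∑ w, #(T w) ≤ Fintype.card α := by
    rw [← card_biUnion fun w _ w' _ h => hdisj h]
    exact card_le_univ _
  have hterm : ∀ w, 2 ≤ #(T w) + if #(T w) = 1 then 1 else 0 := fun w => by
    have := (hne w).card_pos
    split_ifs <;> omega
  calc 2 * Fintype.card κ = ∑ _w : κ, 2 := by simp [mul_comm]
    _ ≤ ∑ w, (#(T w) + if #(T w) = 1 then 1 else 0) := sum_le_sum fun w _ => hterm w
    _ = ∑ w, #(T w) + #{w | #(T w) = 1} := by rw [sum_add_distrib, sum_boole]; simp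
    _ ≤ _ := by omega

theorem Krx2.two_mul_card_le_of_touching {n : ℕ} {κ : Type*} [Fintype κ]
    (T : κ → Finset (Fin n × Fin 2)) (hne : ∀ w, (T w).Nonempty)
    (hdisj : Pairwise (Disjoint on T))
    (htouch : Pairwise fun w w' => ∃ a ∈ T w, ∃ b ∈ T w', (Krx2 n).Adj a b) :
    2 * Fintype.card κ ≤ 3 * n := by
  classical
  have hsingle : #{w | #(T w) = 1} ≤ n := by
    choose f hf using hne
    have hinj : Set.InjOn (fun w => (f w).1) ({w | #(T w) = 1} : Finset κ) := by
      intro w hw w' hw' heq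
      simp only [coe_filter, mem_univ, true_and, Set.mem_ofPred_eq] at hw hw'
      obtain ⟨a, ha⟩ := card_eq_one.1 hw
      obtain ⟨b, hb⟩ := card_eq_one.1 hw'
      by_contra hww
      obtain ⟨a', ha', b', hb', hab⟩ := htouch hww
      have hfw := hf w
      have hfw' := hf w'
      simp only [ha, hb, mem_singleton] at ha' hb' hfw hfw'
      subst ha' hb' hfw hfw'
      exact hab.2.elim (· heq) (· heq.symm)
    simpa using card_le_card_of_injOn _ (fun w _ => mem_univ _) hinj
  have := two_mul_card_le_card_add_card_singletons T hne hdisj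
  simp only [Fintype.card_prod, Fintype.card_fin] at this
  omega

theorem not_choosable_of_forall_exists_adj_eq {V α : Type*} {G : SimpleGraph V} {k : ℕ}
    (e : α ↪ ℕ) (L : V → Finset α) (hL : ∀ v, k ≤ #(L v))
    (h : ∀ C : V → α, (∀ v, C v ∈ L v) → ∃ u v, G.Adj u v ∧ C u = C v) : ¬ Choosable G k := by
  intro hG
  obtain ⟨C, hC, hproper⟩ := hG (fun v => (L v).map e) (by simpa using hL)
  choose c hc hce using fun v => mem_map.1 (hC v)
  obtain ⟨u, v, huv, heq⟩ := h c hc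
  exact hproper huv (by rw [← hce, ← hce, heq])

theorem SimpleGraph.Reachable.eq_of_forall_adj_eq {V α : Type*} {G : SimpleGraph V} {u v : V}
    (f : V → α) (hf : ∀ ⦃x y⦄, G.Adj x y → f x = f y) (h : G.Reachable u v) : f u = f v := by
  obtain ⟨p⟩ := h
  induction p with
  | nil => rfl
  | cons hxy _ ih => exact (hf hxy).trans ih

/-- Copies of `Krx2 n`, one for each `τ : ι`, glued along the common part `{(i, 0)}`:
`(i, none)` is the shared vertex `v_i` and `(i, some τ)` is the vertex `w_i` of the copy `τ`. -/
def gluedKrx2 (n : ℕ) (ι : Type*) : SimpleGraph (Fin n × Option ι) where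
  Adj u v := u.1 ≠ v.1 ∧ (u.2 = none ∨ v.2 = none ∨ u.2 = v.2)
  symm := ⟨fun _ _ h => ⟨h.1.symm, by tauto⟩⟩
  loopless := ⟨fun _ h => h.1 rfl⟩

namespace gluedKrx2

variable {n : ℕ} {ι : Type*}

@[simp]
theorem adj_iff {u v : Fin n × Option ι} :
    (gluedKrx2 n ι).Adj u v ↔ u.1 ≠ v.1 ∧ (u.2 = none ∨ v.2 = none ∨ u.2 = v.2) :=
  Iff.rfl

theorem snd_eq_of_adj {u v : Fin n × Option ι} (h : (gluedKrx2 n ι).Adj u v) (hu : u.2 ≠ none)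
    (hv : v.2 ≠ none) : u.2 = v.2 := by
  simpa [hu, hv] using h.2

def copy (τ : ι) : Krx2 n ↪g gluedKrx2 n ι where
  toFun := Prod.map id ![none, some τ]
  inj' := by
    rintro ⟨i, a⟩ ⟨j, b⟩ h
    fin_cases a <;> fin_cases b <;> simp_all
  map_rel_iff' {a b} := by
    obtain ⟨i, a⟩ := a
    obtain ⟨j, b⟩ := b
    change (gluedKrx2 n ι).Adj (i, ![none, some τ] a) (j, ![none, some τ] b) ↔ _
    rw [adj_iff, Krx2, fromRel_adj]
    fin_cases a <;> fin_cases b <;> simp [ne_comm]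

@[simp]
theorem copy_apply (τ : ι) (a : Fin n × Fin 2) : copy τ a = (a.1, ![none, some τ] a.2) :=
  rfl

theorem mem_range_copy {τ : ι} {v : Fin n × Option ι} :
    v ∈ Set.range (copy τ) ↔ v.2 = none ∨ v.2 = some τ := by
  constructor
  · rintro ⟨⟨i, a⟩, rfl⟩
    fin_cases a <;> simp
  · rintro (hv | hv)
    · exact ⟨(v.1, 0), Prod.ext rfl (by simp [hv])⟩
    · exact ⟨(v.1, 1), Prod.ext rfl (by simp [hv])⟩

theorem snd_eq_of_connected {s : Set (Fin n × Option ι)}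
    (hs : ((gluedKrx2 n ι).induce s).Connected) (hsome : ∀ v ∈ s, v.2 ≠ none)
    {u v : Fin n × Option ι} (hu : u ∈ s) (hv : v ∈ s) : u.2 = v.2 :=
  (hs.preconnected ⟨u, hu⟩ ⟨v, hv⟩).eq_of_forall_adj_eq (fun x : s => x.1.2)
    fun x y hxy => snd_eq_of_adj hxy (hsome _ x.2) (hsome _ y.2)

theorem mem_range_copy_of_adj {τ : ι} {x y : Fin n × Option ι} (hx : x.2 = some τ)
    (h : (gluedKrx2 n ι).Adj x y) : y ∈ Set.range (copy τ) := by
  rw [mem_range_copy]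
  rcases h.2 with h | h | h <;> simp_all

theorem exists_adj_copy {τ : ι} {s t : Set (Fin n × Option ι)}
    (hs : (∃ v ∈ s, v.2 = none) ∨ ∀ v ∈ s, v.2 = some τ)
    (ht : (∃ v ∈ t, v.2 = none) ∨ ∀ v ∈ t, v.2 = some τ) (hst : Disjoint s t)
    (hadj : ∃ x ∈ s, ∃ y ∈ t, (gluedKrx2 n ι).Adj x y) :
    ∃ a, copy τ a ∈ s ∧ ∃ b, copy τ b ∈ t ∧ (Krx2 n).Adj a b := by
  suffices ∃ x ∈ s, ∃ y ∈ t, x ∈ Set.range (copy τ) ∧ y ∈ Set.range (copy τ) ∧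
      (gluedKrx2 n ι).Adj x y by
    obtain ⟨_, hx, _, hy, ⟨a, rfl⟩, ⟨b, rfl⟩, hab⟩ := this
    exact ⟨a, hx, b, hy, (copy τ).map_adj_iff.1 hab⟩
  obtain ⟨x, hx, y, hy, hxy⟩ := hadj
  rcases hs with ⟨v, hv, hvs⟩ | hs
  · rcases ht with ⟨v', hv', hv's⟩ | ht
    · refine ⟨v, hv, v', hv', mem_range_copy.2 (.inl hvs), mem_range_copy.2 (.inl hv's),
        fun h => hst.ne_of_mem hv hv' (Prod.ext h (hvs.trans hv's.symm)), .inl hvs⟩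
    · exact ⟨x, hx, y, hy, mem_range_copy_of_adj (ht y hy) hxy.symm,
        mem_range_copy.2 (.inr (ht y hy)), hxy⟩
  · exact ⟨x, hx, y, hy, mem_range_copy.2 (.inr (hs x hx)), mem_range_copy_of_adj (hs x hx) hxy,
      hxy⟩

theorem two_mul_card_le_of_hasMinor {W : Type*} [Fintype W]
    (h : HasMinor (gluedKrx2 n ι) (completeGraph W)) : 2 * Fintype.card W ≤ 3 * n := by
  classical
  obtain ⟨B, hne, hconn, hdisj, hadj⟩ := h
  by_cases hspine : ∀ w, ∃ v ∈ B w, v.2 = none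
  · choose f hf hfs using hspine
    have hinj : Injective fun w => (f w).1 := fun w w' h => by
      by_contra hww
      exact (hdisj hww).ne_of_mem (hf w) (hf w') (Prod.ext h ((hfs w).trans (hfs w').symm))
    have := Fintype.card_le_of_injective _ hinj
    rw [Fintype.card_fin] at this
    omega
  push Not at hspine
  obtain ⟨w₀, hw₀⟩ := hspine
  obtain ⟨u₀, hu₀⟩ := hne w₀
  obtain ⟨τ, hτ⟩ := Option.ne_none_iff_exists'.1 (hw₀ u₀ hu₀)
  have hcopy : ∀ w, (∃ v ∈ B w, v.2 = none) ∨ ∀ v ∈ B w, v.2 = some τ := by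
    refine fun w => or_iff_not_imp_left.2 fun hw v hv => ?_
    push Not at hw
    rcases eq_or_ne w w₀ with rfl | hww
    · rw [snd_eq_of_connected (hconn w) hw hv hu₀, hτ]
    obtain ⟨x, hx, y, hy, hxy⟩ := hadj hww
    rw [snd_eq_of_connected (hconn w) hw hv hx, snd_eq_of_adj hxy (hw x hx) (hw₀ y hy),
      snd_eq_of_connected (hconn w₀) hw₀ hy hu₀, hτ]
  refine Krx2.two_mul_card_le_of_touching (fun w => {a | copy τ a ∈ B w}) (fun w => ?_)
    (fun w w' hww => disjoint_filter.2 fun a _ h h' => (hdisj hww).ne_of_mem h h' rfl)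
    (fun w w' hww => ?_)
  · obtain ⟨v, hv, hvτ⟩ : ∃ v ∈ B w, v.2 = none ∨ v.2 = some τ := by
      rcases hcopy w with ⟨v, hv, hvs⟩ | hw
      · exact ⟨v, hv, .inl hvs⟩
      · obtain ⟨v, hv⟩ := hne w
        exact ⟨v, hv, .inr (hw v hv)⟩
    obtain ⟨a, rfl⟩ := mem_range_copy.2 hvτ
    exact ⟨a, (mem_filter_univ _).2 hv⟩
  · obtain ⟨a, ha, b, hb, hab⟩ := exists_adj_copy (hcopy w) (hcopy w') (hdisj hww) (hadj hww)
    exact ⟨a, (mem_filter_univ _).2 ha, b, (mem_filter_univ _).2 hb, hab⟩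

/-- Colours `inl (j, a)` form the block `j` of the shared vertex `v_j`; the `k + 1 - n` colours
`inr c` are the fresh colours offered to every `w_i`. -/
def lists (n k : ℕ) : Fin n × Option (Fin n → Fin k) → Finset (Fin n × Fin k ⊕ Fin (k + 1 - n))
  | (i, none) => ({i} ×ˢ univ).disjSum ∅
  | (i, some τ) => ((univ.erase i).image fun j => (j, τ j)).disjSum univ

theorem le_card_lists (n k : ℕ) : ∀ v, k ≤ #(lists n k v)
  | (i, none) => by simp [lists]
  | (i, some τ) => by
    have hblock : #((univ.erase i).image fun j => (j, τ j)) = n - 1 := by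
      rw [card_image_of_injective _ fun j j' h => congrArg Prod.fst h,
        card_erase_of_mem (mem_univ i), card_univ, Fintype.card_fin]
    have hn := i.pos
    simp only [lists, card_disjSum, hblock, card_univ, Fintype.card_fin]
    omega

theorem not_choosable {n k : ℕ} (hk : k + 2 ≤ 2 * n) :
    ¬ Choosable (gluedKrx2 n (Fin n → Fin k)) k := by
  refine not_choosable_of_forall_exists_adj_eq (Encodable.encode' _) (lists n k)
    (le_card_lists n k) fun C hC => ?_
  by_contra! hproper
  have hspine : ∀ i, ∃ a, C (i, none) = .inl (i, a) := fun i => by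
    simpa [lists, eq_comm] using hC (i, none)
  choose τ hτ using hspine
  have hfresh : ∀ i, ∃ c, C (i, some τ) = .inr c := fun i => by
    have hCi := hC (i, some τ)
    simp only [lists, mem_disjSum, mem_image, mem_erase, mem_univ, and_true, true_and] at hCi
    obtain ⟨_, ⟨j, hji, rfl⟩, hj⟩ | ⟨c, hc⟩ := hCi
    · exact (hproper (i, some τ) (j, none) ⟨hji.symm, .inr (.inl rfl)⟩
        (hj.symm.trans (hτ j).symm)).elim
    · exact ⟨c, hc.symm⟩
  choose c hc using hfresh
  have hinj : Injective c := fun i j h => by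
    by_contra hij
    exact hproper (i, some τ) (j, some τ) ⟨hij, .inr (.inr rfl)⟩ (by rw [hc, hc, h])
  have := Fintype.card_le_of_injective c hinj
  simp only [Fintype.card_fin] at this
  omega

end gluedKrx2

/-- For every $t ≥ 1$ there is a $K_{3t+1}$-minor-free graph that is not $(4t-2)$-choosable. -/
theorem main_b (t : ℕ) (ht : 1 ≤ t) :
    ∃ (V : Type) (_ : Fintype V) (G : SimpleGraph V),
      ¬ HasMinor G (completeGraph (Fin (3 * t + 1))) ∧ ¬ Choosable G (4 * t - 2) := by
  refine ⟨Fin (2 * t) × Option (Fin (2 * t) → Fin (4 * t - 2)), inferInstance, gluedKrx2 _ _,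
    fun h => ?_, gluedKrx2.not_choosable (by omega)⟩
  have := gluedKrx2.two_mul_card_le_of_hasMinor h
  rw [Fintype.card_fin] at this
  omega
end

section
/- There exists a K_8-minor-free graph that is not 8-choosable. (Hence the List Hadwiger Conjecture, asserting every K_t-minor-free graph is t-choosable, fails for t = 8.) -/
open SimpleGraph

/-! The graph glues copies of `K_{r×2}`, one for each `t : Fin r → Fin k`, along a common clique
`K_r`; here `r = 5` and `k = 8`.

A `K_k` minor has a branch set avoiding the core, which lies in a single copy `t₀`, and then every
branch set meets the core or lies in copy `t₀`. Intersecting the branch sets with core ∪ copy `t₀`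
gives `k` disjoint, nonempty, pairwise touching sets in `2r` vertices. At least `2k - 2r` of them
are singletons, and these form a clique, but the graph is `r`-colourable; so `2k ≤ 3r`.

For list colouring, core vertex `i` gets the colours `(i, a)`, `a < k`, so a colouring of the core
picks a function `t`. Vertex `i` of copy `t` gets the colours `(j, t j)`, `j ≠ i`, all blocked by
its neighbours in the core, and `k + 1 - r` spare colours shared by the whole copy: too few for a
clique on `r` vertices once `k + 1 < 2r`. -/

open Finset Function

section TouchingFamilies

variable {V ι : Type*} {G : SimpleGraph V}

theorem SimpleGraph.Reachable.eq_of_forall_adj {α : Type*} {f : V → α}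
    (hf : ∀ u v, G.Adj u v → f u = f v) {u v : V} (h : G.Reachable u v) : f u = f v := by
  obtain ⟨p⟩ := h
  induction p with
  | nil => rfl
  | cons hadj _ ih => exact (hf _ _ hadj).trans ih

theorem exists_disjoint_range_of_card_lt [Fintype ι] {κ : Type*} [Fintype κ] {B : ι → Set V}
    (hdisj : Pairwise (Disjoint on B)) (f : κ → V) (h : Fintype.card κ < Fintype.card ι) :
    ∃ i, Disjoint (B i) (Set.range f) := by
  by_contra! hmeet
  have hhit : ∀ i, ∃ c, f c ∈ B i := fun i => by
    obtain ⟨_, hx, c, rfl⟩ := Set.not_disjoint_iff.1 (hmeet i)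
    exact ⟨c, hx⟩
  choose c hc using hhit
  have hinj : Injective c := fun i j hij => by
    by_contra hne
    exact Set.disjoint_left.1 (hdisj hne) (hc i) (by rw [hij]; exact hc j)
  exact h.not_ge (Fintype.card_le_of_injective _ hinj)

/-- Singleton members of a touching family form a clique, and every other member has at least two
vertices. -/
theorem two_mul_card_le_of_pairwise_adj [Fintype ι] {r : ℕ} (hG : G.Colorable r)
    {U : Finset V} {F : ι → Finset V} (hFU : ∀ i, F i ⊆ U) (hne : ∀ i, (F i).Nonempty)
    (hdisj : Pairwise (Disjoint on F))
    (hadj : Pairwise fun i j => ∃ u ∈ F i, ∃ v ∈ F j, G.Adj u v) :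
    2 * Fintype.card ι ≤ #U + r := by
  classical
  set S := univ.filter fun i => #(F i) = 1
  have hsum : ∑ i, #(F i) ≤ #U := by
    rw [← card_biUnion fun i _ j _ hij => hdisj hij]
    exact card_le_card (biUnion_subset.2 fun i _ => hFU i)
  have hS : #S ≤ r := by
    choose f hf using fun i : S => card_eq_one.1 (mem_filter.1 i.2).2
    have hclique : Pairwise fun i j : S => G.Adj (f i) (f j) := by
      intro i j hij
      obtain ⟨u, hu, v, hv, huv⟩ := hadj (Subtype.coe_ne_coe.2 hij)
      rw [hf i, mem_singleton] at hu
      rw [hf j, mem_singleton] at hv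
      rwa [← hu, ← hv]
    simpa using hG.card_le_of_pairwise_adj f hclique
  have hpoint : ∀ i, 2 ≤ #(F i) + if #(F i) = 1 then 1 else 0 := fun i => by
    have := (hne i).card_pos
    split_ifs <;> omega
  calc 2 * Fintype.card ι = ∑ _i : ι, 2 := by simp [mul_comm]
    _ ≤ ∑ i, (#(F i) + if #(F i) = 1 then 1 else 0) := sum_le_sum fun i _ => hpoint i
    _ = ∑ i, #(F i) + #S := by rw [sum_add_distrib, sum_boole, Nat.cast_id]
    _ ≤ #U + r := add_le_add hsum hS

theorem pairwise_adj_filter_mem {K : Set V} {U : Finset V} (hK : G.IsClique K) (hKU : K ⊆ U)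
    (hU : ∀ u ∈ (U : Set V) \ K, ∀ v, G.Adj u v → v ∈ U) {B : ι → Set V}
    [∀ i, DecidablePred (· ∈ B i)] (hdisj : Pairwise (Disjoint on B))
    (hadj : Pairwise fun i j => ∃ u ∈ B i, ∃ v ∈ B j, G.Adj u v)
    (hB : ∀ i, (B i ∩ K).Nonempty ∨ B i ⊆ (U : Set V) \ K) :
    Pairwise fun i j => ∃ u ∈ U.filter (· ∈ B i), ∃ v ∈ U.filter (· ∈ B j), G.Adj u v := by
  intro i j hij
  simp only [mem_filter]
  rcases hB i with ⟨x, hxi, hxK⟩ | hi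
  · rcases hB j with ⟨y, hyj, hyK⟩ | hj
    · refine ⟨x, ⟨hKU hxK, hxi⟩, y, ⟨hKU hyK, hyj⟩, hK hxK hyK ?_⟩
      rintro rfl
      exact Set.disjoint_left.1 (hdisj hij) hxi hyj
    · obtain ⟨u, hu, v, hv, huv⟩ := hadj hij
      exact ⟨u, ⟨hU v (hj hv) u huv.symm, hu⟩, v, ⟨(hj hv).1, hv⟩, huv⟩
  · obtain ⟨u, hu, v, hv, huv⟩ := hadj hij
    exact ⟨u, ⟨(hi hu).1, hu⟩, v, ⟨hU u (hi hu) v huv, hv⟩, huv⟩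

end TouchingFamilies

/-- The core is `Sum.inl`; copy `t` is `fun i => Sum.inr (t, i)`, and `Sum.inl i`, `Sum.inr (t, i)`
form the `i`-th part of the `t`-th `K_{r×2}`. -/
def cliqueSumKrx2 (r : ℕ) (T : Type*) : SimpleGraph (Fin r ⊕ T × Fin r) where
  Adj
    | .inl i, .inl j => i ≠ j
    | .inl i, .inr s => i ≠ s.2
    | .inr s, .inl j => s.2 ≠ j
    | .inr s, .inr t => s.1 = t.1 ∧ s.2 ≠ t.2
  symm := ⟨by
    rintro (i | s) (j | t) h
    exacts [Ne.symm h, Ne.symm h, Ne.symm h, ⟨h.1.symm, h.2.symm⟩]⟩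
  loopless := ⟨by
    rintro (i | s) h
    exacts [h rfl, h.2 rfl]⟩

namespace cliqueSumKrx2

open Sum

variable {r : ℕ} {T : Type*}

@[simp] theorem adj_inl_inl {i j : Fin r} :
    (cliqueSumKrx2 r T).Adj (inl i) (inl j) ↔ i ≠ j := Iff.rfl

@[simp] theorem adj_inl_inr {i : Fin r} {s : T × Fin r} :
    (cliqueSumKrx2 r T).Adj (inl i) (inr s) ↔ i ≠ s.2 := Iff.rfl

@[simp] theorem adj_inr_inl {s : T × Fin r} {j : Fin r} :
    (cliqueSumKrx2 r T).Adj (inr s) (inl j) ↔ s.2 ≠ j := Iff.rfl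

@[simp] theorem adj_inr_inr {s t : T × Fin r} :
    (cliqueSumKrx2 r T).Adj (inr s) (inr t) ↔ s.1 = t.1 ∧ s.2 ≠ t.2 := Iff.rfl

theorem colorable : (cliqueSumKrx2 r T).Colorable r :=
  ⟨SimpleGraph.Coloring.mk (Sum.elim id Prod.snd) fun {u v} h => by
    rcases u with i | s <;> rcases v with j | t
    exacts [h, h, h, h.2]⟩

theorem isClique_range_inl : (cliqueSumKrx2 r T).IsClique (Set.range inl) := by
  rintro _ ⟨i, rfl⟩ _ ⟨j, rfl⟩ hij
  exact fun h => hij (congrArg inl h)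

theorem fst_eq_of_connected {S : Set (Fin r ⊕ T × Fin r)}
    (hS : ((cliqueSumKrx2 r T).induce S).Connected) (hcore : Disjoint S (Set.range inl))
    {s t : T × Fin r} (hs : inr s ∈ S) (ht : inr t ∈ S) : s.1 = t.1 := by
  let copy : S → Option T := fun v => Sum.elim (fun _ => none) (fun s => some s.1) v.1
  have hcopy : ∀ u v, ((cliqueSumKrx2 r T).induce S).Adj u v → copy u = copy v := by
    rintro ⟨u | u, hu⟩ ⟨v | v, hv⟩ huv
    · exact absurd ⟨u, rfl⟩ (Set.disjoint_left.1 hcore hu)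
    · exact absurd ⟨u, rfl⟩ (Set.disjoint_left.1 hcore hu)
    · exact absurd ⟨v, rfl⟩ (Set.disjoint_left.1 hcore hv)
    · simp [copy, (adj_inr_inr.1 huv).1]
  simpa [copy] using (hS.preconnected ⟨_, hs⟩ ⟨_, ht⟩).eq_of_forall_adj hcopy

def block (t : T) : Finset (Fin r ⊕ T × Fin r) :=
  univ.disjSum (univ.map (Embedding.sectR t (Fin r)))

theorem card_block (t : T) : #(block (r := r) t) = 2 * r := by
  simp [block, two_mul]

@[simp] theorem inl_mem_block {t : T} {i : Fin r} : inl i ∈ block t := by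
  simp [block]

@[simp] theorem inr_mem_block {t : T} {s : T × Fin r} : inr s ∈ block t ↔ s.1 = t := by
  simp only [block, inr_mem_disjSum, mem_map, mem_univ, true_and, Embedding.sectR_apply]
  exact ⟨by rintro ⟨i, rfl⟩; rfl, fun h => ⟨s.2, by rw [← h]⟩⟩

theorem mem_block_of_adj {t : T} {u v : Fin r ⊕ T × Fin r}
    (hu : u ∈ ↑(block (r := r) t) \ Set.range inl) (huv : (cliqueSumKrx2 r T).Adj u v) :
    v ∈ block t := by
  rcases u with i | s
  · exact absurd ⟨i, rfl⟩ hu.2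
  rcases v with j | s'
  · exact inl_mem_block
  · have hs := inr_mem_block.1 hu.1
    rw [inr_mem_block, ← hs, (adj_inr_inr.1 huv).1]

theorem exists_eq_inr_of_disjoint {S : Set (Fin r ⊕ T × Fin r)} (hS : Disjoint S (Set.range inl))
    {v : Fin r ⊕ T × Fin r} (hv : v ∈ S) : ∃ s, v = inr s := by
  rcases v with i | s
  exacts [absurd ⟨i, rfl⟩ (Set.disjoint_left.1 hS hv), ⟨s, rfl⟩]

/-- Branch sets avoiding the core lie in copies, and touching ones in the same copy. -/
theorem exists_block {k : ℕ} (hrk : r < k) {B : Fin k → Set (Fin r ⊕ T × Fin r)}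
    (hne : ∀ j, (B j).Nonempty) (hconn : ∀ j, ((cliqueSumKrx2 r T).induce (B j)).Connected)
    (hdisj : Pairwise (Disjoint on B))
    (hadj : Pairwise fun i j => ∃ u ∈ B i, ∃ v ∈ B j, (cliqueSumKrx2 r T).Adj u v) :
    ∃ t₀ : T, ∀ j, (B j ∩ Set.range inl).Nonempty ∨ B j ⊆ ↑(block (r := r) t₀) \ Set.range inl := by
  obtain ⟨j₀, hj₀⟩ := exists_disjoint_range_of_card_lt hdisj (inl : Fin r → _)
    (by simpa only [Fintype.card_fin] using hrk)
  obtain ⟨v₀, hv₀⟩ := hne j₀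
  obtain ⟨s₀, rfl⟩ := exists_eq_inr_of_disjoint hj₀ hv₀
  refine ⟨s₀.1, fun j => ?_⟩
  rw [← Set.not_disjoint_iff_nonempty_inter, or_iff_not_imp_left, not_not]
  intro hj v hv
  obtain ⟨s, rfl⟩ := exists_eq_inr_of_disjoint hj hv
  refine ⟨inr_mem_block.2 ?_, Set.disjoint_left.1 hj hv⟩
  obtain rfl | hne := eq_or_ne j j₀
  · exact fst_eq_of_connected (hconn j) hj hv hv₀
  obtain ⟨u, hu, w, hw, huw⟩ := hadj hne
  obtain ⟨a, rfl⟩ := exists_eq_inr_of_disjoint hj hu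
  obtain ⟨b, rfl⟩ := exists_eq_inr_of_disjoint hj₀ hw
  calc s.1 = a.1 := fst_eq_of_connected (hconn j) hj hv hu
    _ = b.1 := (adj_inr_inr.1 huw).1
    _ = s₀.1 := fst_eq_of_connected (hconn j₀) hj₀ hw hv₀

theorem not_hasMinor {k : ℕ} (hrk : 3 * r < 2 * k) :
    ¬ HasMinor (cliqueSumKrx2 r T) (completeGraph (Fin k)) := by
  classical
  rintro ⟨B, hne, hconn, hdisj, hadj⟩
  obtain ⟨t₀, hB⟩ := exists_block (by omega) hne hconn hdisj hadj
  let F j := (block t₀).filter (· ∈ B j)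
  have hFne : ∀ j, (F j).Nonempty := fun j => by
    rcases hB j with ⟨x, hx, i, rfl⟩ | hj
    · exact ⟨_, mem_filter.2 ⟨inl_mem_block, hx⟩⟩
    · obtain ⟨x, hx⟩ := hne j
      exact ⟨x, mem_filter.2 ⟨(hj hx).1, hx⟩⟩
  have hFdisj : Pairwise (Disjoint on F) := fun i j hij => Finset.disjoint_left.2 fun v hi hj =>
    Set.disjoint_left.1 (hdisj hij) (mem_filter.1 hi).2 (mem_filter.1 hj).2
  have hFadj := pairwise_adj_filter_mem isClique_range_inl
    (by rintro _ ⟨i, rfl⟩; exact inl_mem_block) (fun u hu v huv => mem_block_of_adj hu huv)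
    hdisj hadj hB
  have := two_mul_card_le_of_pairwise_adj colorable (fun j => filter_subset _ _) hFne hFdisj hFadj
  rw [card_block, Fintype.card_fin] at this
  omega

section ListColouring

variable {k : ℕ}

def pairColour {r k : ℕ} (i : Fin r) (a : Fin k) : ℕ := finProdFinEquiv (i, a)

theorem pairColour_lt (i : Fin r) (a : Fin k) : pairColour i a < r * k :=
  (finProdFinEquiv (i, a)).2

theorem pairColour_inj {i j : Fin r} {a b : Fin k} :
    pairColour i a = pairColour j b ↔ i = j ∧ a = b := by
  rw [pairColour, pairColour, Fin.val_inj, finProdFinEquiv.apply_eq_iff_eq, Prod.mk.injEq]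

def spareColours (r k : ℕ) : Finset ℕ := Ico (r * k) (r * k + (k + 1 - r))

def listAssignment (r k : ℕ) : Fin r ⊕ (Fin r → Fin k) × Fin r → Finset ℕ
  | inl i => (univ : Finset (Fin k)).image (pairColour i)
  | inr (t, i) => (univ.erase i).image (fun j => pairColour j (t j)) ∪ spareColours r k

theorem le_card_listAssignment : ∀ v, k ≤ #(listAssignment r k v)
  | inl i => by
    rw [listAssignment, card_image_of_injective _ fun a b h => (pairColour_inj.1 h).2, card_univ,
      Fintype.card_fin]
  | inr (t, i) => by
    have hdisj :
        Disjoint ((univ.erase i).image fun j => pairColour j (t j)) (spareColours r k) := by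
      simp only [Finset.disjoint_left, mem_image, spareColours, mem_Ico]
      rintro _ ⟨j, -, rfl⟩ h
      exact (pairColour_lt j (t j)).not_ge h.1
    rw [listAssignment, card_union_of_disjoint hdisj,
      card_image_of_injOn fun a _ b _ h => (pairColour_inj.1 h).1, card_erase_of_mem (mem_univ i),
      card_univ, Fintype.card_fin, spareColours, Nat.card_Ico]
    have := i.2
    omega

theorem not_choosable (hk : k + 1 < 2 * r) : ¬ Choosable (cliqueSumKrx2 r (Fin r → Fin k)) k := by
  intro h
  obtain ⟨C, hCL, hC⟩ := h (listAssignment r k) le_card_listAssignment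
  have hcore : ∀ i, ∃ a : Fin k, pairColour i a = C (inl i) := fun i => by
    simpa [listAssignment] using hCL (inl i)
  choose t ht using hcore
  have hspare : ∀ i, C (inr (t, i)) ∈ spareColours r k := by
    intro i
    rcases mem_union.1 (hCL (inr (t, i))) with hi | hi
    · obtain ⟨j, hji, hj⟩ := mem_image.1 hi
      exact absurd (hj.symm.trans (ht j)) (hC (adj_inr_inl.2 (Ne.symm (ne_of_mem_erase hji))))
    · exact hi
  have hinj : Set.InjOn (fun i => C (inr (t, i))) (univ : Finset (Fin r)) := by
    intro i _ j _ hij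
    by_contra hne
    exact hC (adj_inr_inr.2 ⟨rfl, hne⟩ : (cliqueSumKrx2 r _).Adj (inr (t, i)) (inr (t, j))) hij
  have := card_le_card_of_injOn _ (fun i _ => hspare i) hinj
  rw [card_univ, Fintype.card_fin, spareColours, Nat.card_Ico] at this
  omega

end ListColouring

end cliqueSumKrx2

/-- There is a $K_8$-minor-free graph that is not $8$-choosable: the List Hadwiger
Conjecture fails for $t = 8$. -/
theorem list_hadwiger_fails_at_8 :
    ∃ (V : Type) (_ : Fintype V) (G : SimpleGraph V),
      ¬ HasMinor G (completeGraph (Fin 8)) ∧ ¬ Choosable G 8 :=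
  ⟨_, inferInstance, cliqueSumKrx2 5 (Fin 5 → Fin 8), cliqueSumKrx2.not_hasMinor (by norm_num),
    cliqueSumKrx2.not_choosable (by norm_num)⟩
end

section
/- The complete bipartite graph K_{3,3} is 3-choosable. -/
open SimpleGraph

lemma card_triple_le (a b c : ℕ) : ({a,b,c} : Finset ℕ).card ≤ 3 := by
  refine le_trans (Finset.card_insert_le _ _) (Nat.succ_le_succ ?_)
  refine le_trans (Finset.card_insert_le _ _) (Nat.succ_le_succ ?_)
  simp

lemma notsub {B S : Finset ℕ} (hB : 3 ≤ B.card) (hS : S.card ≤ 3) (hne : S ≠ B) :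
    ¬ B ⊆ S := fun h => hne (Finset.eq_of_subset_of_card_le h (hS.trans hB)).symm

lemma key (A0 A1 A2 B0 B1 B2 : Finset ℕ)
    (hA0 : 3 ≤ A0.card) (hA1 : 3 ≤ A1.card) (hA2 : 3 ≤ A2.card)
    (hB0 : 3 ≤ B0.card) (hB1 : 3 ≤ B1.card) (hB2 : 3 ≤ B2.card) :
    ∃ c0 ∈ A0, ∃ c1 ∈ A1, ∃ c2 ∈ A2,
      ¬ B0 ⊆ {c0,c1,c2} ∧ ¬ B1 ⊆ {c0,c1,c2} ∧ ¬ B2 ⊆ {c0,c1,c2} := by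
  -- helper: if the triple has ≤ 2 elements, no B can be a subset
  have small : ∀ (c0 c1 c2 p q : ℕ), ({c0,c1,c2} : Finset ℕ) ⊆ {p,q} →
      ∀ B : Finset ℕ, 3 ≤ B.card → ¬ B ⊆ {c0,c1,c2} := by
    intro c0 c1 c2 p q hsub B hB h
    have h1 := Finset.card_le_card (h.trans hsub)
    have h2 : ({p,q} : Finset ℕ).card ≤ 2 :=
      le_trans (Finset.card_insert_le _ _) (by simp)
    omega
  by_cases h01 : (A0 ∩ A1).Nonempty
  · obtain ⟨x, hx⟩ := h01
    rw [Finset.mem_inter] at hx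
    obtain ⟨z, hz⟩ := Finset.card_pos.mp (by omega : 0 < A2.card)
    have hsub : ({x, x, z} : Finset ℕ) ⊆ {x, z} := by intro u hu; simp at hu ⊢; tauto
    exact ⟨x, hx.1, x, hx.2, z, hz, small _ _ _ _ _ hsub _ hB0,
      small _ _ _ _ _ hsub _ hB1, small _ _ _ _ _ hsub _ hB2⟩
  by_cases h02 : (A0 ∩ A2).Nonempty
  · obtain ⟨x, hx⟩ := h02
    rw [Finset.mem_inter] at hx
    obtain ⟨y, hy⟩ := Finset.card_pos.mp (by omega : 0 < A1.card)
    have hsub : ({x, y, x} : Finset ℕ) ⊆ {x, y} := by intro u hu; simp at hu ⊢; tauto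
    exact ⟨x, hx.1, y, hy, x, hx.2, small _ _ _ _ _ hsub _ hB0,
      small _ _ _ _ _ hsub _ hB1, small _ _ _ _ _ hsub _ hB2⟩
  by_cases h12 : (A1 ∩ A2).Nonempty
  · obtain ⟨x, hx⟩ := h12
    rw [Finset.mem_inter] at hx
    obtain ⟨y, hy⟩ := Finset.card_pos.mp (by omega : 0 < A0.card)
    have hsub : ({y, x, x} : Finset ℕ) ⊆ {x, y} := by intro u hu; simp at hu ⊢; tauto
    exact ⟨y, hy, x, hx.1, x, hx.2, small _ _ _ _ _ hsub _ hB0,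
      small _ _ _ _ _ hsub _ hB1, small _ _ _ _ _ hsub _ hB2⟩
  -- disjoint case: counting argument
  rw [Finset.not_nonempty_iff_eq_empty] at h01 h02 h12
  have hd01 : ∀ u v : ℕ, u ∈ A0 → v ∈ A1 → u ≠ v := by
    intro u v hu hv he
    have : u ∈ A0 ∩ A1 := Finset.mem_inter.mpr ⟨hu, he ▸ hv⟩
    simp [h01] at this
  have hd02 : ∀ u v : ℕ, u ∈ A0 → v ∈ A2 → u ≠ v := by
    intro u v hu hv he
    have : u ∈ A0 ∩ A2 := Finset.mem_inter.mpr ⟨hu, he ▸ hv⟩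
    simp [h02] at this
  have hd12 : ∀ u v : ℕ, u ∈ A1 → v ∈ A2 → u ≠ v := by
    intro u v hu hv he
    have : u ∈ A1 ∩ A2 := Finset.mem_inter.mpr ⟨hu, he ▸ hv⟩
    simp [h12] at this
  set T : Finset (ℕ × ℕ × ℕ) := A0 ×ˢ A1 ×ˢ A2 with hT
  have hinj : Set.InjOn (fun p : ℕ × ℕ × ℕ => ({p.1, p.2.1, p.2.2} : Finset ℕ)) T := by
    intro p hp q hq h
    simp only [hT, Finset.coe_product, Set.mem_prod] at hp hq
    obtain ⟨hp0, hp1, hp2⟩ := hp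
    obtain ⟨hq0, hq1, hq2⟩ := hq
    simp only at h
    have e0 : p.1 = q.1 := by
      have : p.1 ∈ ({q.1, q.2.1, q.2.2} : Finset ℕ) := h ▸ (by simp)
      simp only [Finset.mem_insert, Finset.mem_singleton] at this
      rcases this with h' | h' | h'
      · exact h'
      · exact absurd h' (hd01 _ _ hp0 hq1)
      · exact absurd h' (hd02 _ _ hp0 hq2)
    have e1 : p.2.1 = q.2.1 := by
      have : p.2.1 ∈ ({q.1, q.2.1, q.2.2} : Finset ℕ) := h ▸ (by simp)
      simp only [Finset.mem_insert, Finset.mem_singleton] at this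
      rcases this with h' | h' | h'
      · exact absurd h'.symm (hd01 _ _ hq0 hp1)
      · exact h'
      · exact absurd h' (hd12 _ _ hp1 hq2)
    have e2 : p.2.2 = q.2.2 := by
      have : p.2.2 ∈ ({q.1, q.2.1, q.2.2} : Finset ℕ) := h ▸ (by simp)
      simp only [Finset.mem_insert, Finset.mem_singleton] at this
      rcases this with h' | h' | h'
      · exact absurd h'.symm (hd02 _ _ hq0 hp2)
      · exact absurd h'.symm (hd12 _ _ hq1 hp2)
      · exact h'
    exact Prod.ext e0 (Prod.ext e1 e2)
  have hTbig : 27 ≤ T.card := by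
    have : T.card = A0.card * (A1.card * A2.card) := by
      simp [hT, Finset.card_product]
    rw [this]
    calc 27 = 3 * (3 * 3) := rfl
    _ ≤ A0.card * (A1.card * A2.card) :=
      Nat.mul_le_mul hA0 (Nat.mul_le_mul hA1 hA2)
  obtain ⟨p, hpT, hpg⟩ : ∃ p ∈ T,
      ({p.1, p.2.1, p.2.2} : Finset ℕ) ∉ ({B0, B1, B2} : Finset (Finset ℕ)) := by
    by_contra hcon
    push_neg at hcon
    have hle : T.card ≤ ({B0, B1, B2} : Finset (Finset ℕ)).card :=
      Finset.card_le_card_of_injOn _ (fun p hp => hcon p hp) hinj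
    have : ({B0, B1, B2} : Finset (Finset ℕ)).card ≤ 3 := by
      refine le_trans (Finset.card_insert_le _ _) (Nat.succ_le_succ ?_)
      refine le_trans (Finset.card_insert_le _ _) (Nat.succ_le_succ ?_)
      simp
    omega
  simp only [hT, Finset.mem_product] at hpT
  obtain ⟨hp0, hp1, hp2⟩ := hpT
  simp only [Finset.mem_insert, Finset.mem_singleton, not_or] at hpg
  exact ⟨p.1, hp0, p.2.1, hp1, p.2.2, hp2,
    notsub hB0 (card_triple_le _ _ _) hpg.1,
    notsub hB1 (card_triple_le _ _ _) hpg.2.1,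
    notsub hB2 (card_triple_le _ _ _) hpg.2.2⟩

/-- $K_{3,3}$ is $3$-choosable. -/
theorem K33_three_choosable :
    Choosable (completeBipartiteGraph (Fin 3) (Fin 3)) 3 := by
  intro L hL
  obtain ⟨c0, hc0, c1, hc1, c2, hc2, hn0, hn1, hn2⟩ :=
    key (L (.inl 0)) (L (.inl 1)) (L (.inl 2)) (L (.inr 0)) (L (.inr 1)) (L (.inr 2))
      (hL _) (hL _) (hL _) (hL _) (hL _) (hL _)
  obtain ⟨b0, hb0, hb0'⟩ := Finset.not_subset.mp hn0
  obtain ⟨b1, hb1, hb1'⟩ := Finset.not_subset.mp hn1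
  obtain ⟨b2, hb2, hb2'⟩ := Finset.not_subset.mp hn2
  refine ⟨Sum.elim ![c0, c1, c2] ![b0, b1, b2], ?_, ?_⟩
  · rintro (i | j)
    · fin_cases i <;> simpa using ‹_›
    · fin_cases j <;> simpa using ‹_›
  · have hmem : ∀ i : Fin 3, (![c0, c1, c2] i) ∈ ({c0, c1, c2} : Finset ℕ) := by
      intro i; fin_cases i <;> simp
    have hnmem : ∀ j : Fin 3, (![b0, b1, b2] j) ∉ ({c0, c1, c2} : Finset ℕ) := by
      intro j; fin_cases j <;> first | exact hb0' | exact hb1' | exact hb2'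
    rintro (i | i) (j | j) hadj <;> simp [completeBipartiteGraph] at hadj <;> simp only [Sum.elim_inl, Sum.elim_inr]
    · intro h; exact hnmem j (h ▸ hmem i)
    · intro h; exact hnmem i (h.symm ▸ hmem j)
end
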